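/- Under the frame setup on ℝ_t × ℝ²_x, suppose additionally that φ : ℝ × ℝ² → ℝ is C¹, κ ∈ ℝ, and that S satisfies the Ishimori evolution equation pointwise: ∂_t S = S × (∂₁² S − ∂₂² S) + κ ( ∂₁φ · ∂₁ S + ∂₂φ · ∂₂ S ). Then pointwise ψ_t = i ( D₁ ψ₁ − D₂ ψ₂ ) + κ ( ψ₁ ∂₁φ + ψ₂ ∂₂φ ). -/

import Mathlib

/-! `ψ_α` is the complex coordinate `⟨v, ·⟩ + i ⟨w, ·⟩` of `∂_α S`, a vector of the plane
spanned by `v` and `w`. Differentiating `ψ_β` along `α`, the motion of the orthonormal frame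
contributes exactly `-i A_α ψ_β` (its connection matrix is skew), so `D_α ψ_β` is the complex
coordinate of `∂_α ∂_β S`. Since `S × ·` acts on the plane of `v, w` as multiplication by `i`,
taking complex coordinates in the Ishimori equation gives the identity. -/

open Matrix

/-- The time direction in `ℝ_t × ℝ²_x`. -/
def et : ℝ × ℝ × ℝ := (1, 0, 0)
/-- The first spatial direction in `ℝ_t × ℝ²_x`. -/
def e1 : ℝ × ℝ × ℝ := (0, 1, 0)
/-- The second spatial direction in `ℝ_t × ℝ²_x`. -/
def e2 : ℝ × ℝ × ℝ := (0, 0, 1)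

/-- Partial derivative of `f` in direction `e`. -/
noncomputable def pd3 {E : Type*} [NormedAddCommGroup E] [NormedSpace ℝ E]
    (f : ℝ × ℝ × ℝ → E) (e : ℝ × ℝ × ℝ) (p : ℝ × ℝ × ℝ) : E :=
  fderiv ℝ f p e

/-- The complexified differentiated field `ψ_α = ⟨v, ∂_α S⟩ + i ⟨w, ∂_α S⟩`. -/
noncomputable def framePsi (S v w : ℝ × ℝ × ℝ → Fin 3 → ℝ) (e p : ℝ × ℝ × ℝ) : ℂ :=
  ((v p ⬝ᵥ pd3 S e p : ℝ) : ℂ) + Complex.I * ((w p ⬝ᵥ pd3 S e p : ℝ) : ℂ)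

/-- The real connection coefficient `A_α = ⟨w, ∂_α v⟩`. -/
noncomputable def frameA (v w : ℝ × ℝ × ℝ → Fin 3 → ℝ) (e p : ℝ × ℝ × ℝ) : ℝ :=
  w p ⬝ᵥ pd3 v e p

/-- The covariant derivative `D_α f = ∂_α f + i A_α f`. -/
noncomputable def Dcov (A : ℝ × ℝ × ℝ → ℝ) (f : ℝ × ℝ × ℝ → ℂ) (e p : ℝ × ℝ × ℝ) : ℂ :=
  fderiv ℝ f p e + Complex.I * (A p : ℂ) * f p

section ProductRule

variable {𝕜 : Type*} [NontriviallyNormedField 𝕜] [CompleteSpace 𝕜]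
  {H E F G : Type*} [NormedAddCommGroup H] [NormedSpace 𝕜 H]
  [NormedAddCommGroup E] [NormedSpace 𝕜 E] [FiniteDimensional 𝕜 E]
  [NormedAddCommGroup F] [NormedSpace 𝕜 F] [FiniteDimensional 𝕜 F]
  [NormedAddCommGroup G] [NormedSpace 𝕜 G]
  (B : E →ₗ[𝕜] F →ₗ[𝕜] G) {f : H → E} {g : H → F} {p : H}

theorem LinearMap.hasFDerivAt_bilinear {f' : H →L[𝕜] E} {g' : H →L[𝕜] F}
    (hf : HasFDerivAt f f' p) (hg : HasFDerivAt g g' p) :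
    HasFDerivAt (fun q => B (f q) (g q))
      (B.toContinuousBilinearMap.precompR H (f p) g' +
        B.toContinuousBilinearMap.precompL H f' (g p)) p :=
  B.toContinuousBilinearMap.hasFDerivAt_of_bilinear hf hg

theorem LinearMap.differentiableAt_bilinear (hf : DifferentiableAt 𝕜 f p)
    (hg : DifferentiableAt 𝕜 g p) : DifferentiableAt 𝕜 (fun q => B (f q) (g q)) p :=
  (B.hasFDerivAt_bilinear hf.hasFDerivAt hg.hasFDerivAt).differentiableAt

theorem LinearMap.fderiv_bilinear_apply (hf : DifferentiableAt 𝕜 f p)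
    (hg : DifferentiableAt 𝕜 g p) (h : H) :
    fderiv 𝕜 (fun q => B (f q) (g q)) p h =
      B (fderiv 𝕜 f p h) (g p) + B (f p) (fderiv 𝕜 g p h) := by
  rw [(B.hasFDerivAt_bilinear hf.hasFDerivAt hg.hasFDerivAt).fderiv]
  simp [add_comm]

end ProductRule

section DotProduct

variable {ι H : Type*} [Fintype ι] [NormedAddCommGroup H] [NormedSpace ℝ H]
  {f g : H → ι → ℝ} {p : H}

theorem fderiv_dotProduct_apply (hf : DifferentiableAt ℝ f p) (hg : DifferentiableAt ℝ g p)
    (h : H) :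
    fderiv ℝ (fun q => f q ⬝ᵥ g q) p h = fderiv ℝ f p h ⬝ᵥ g p + f p ⬝ᵥ fderiv ℝ g p h :=
  (dotProductBilin ℝ ℝ).fderiv_bilinear_apply hf hg h

theorem fderiv_dotProduct_add_eq_zero {c : ℝ} (hf : DifferentiableAt ℝ f p)
    (hg : DifferentiableAt ℝ g p) (hfg : ∀ q, f q ⬝ᵥ g q = c) (h : H) :
    fderiv ℝ f p h ⬝ᵥ g p + f p ⬝ᵥ fderiv ℝ g p h = 0 := by
  rw [← fderiv_dotProduct_apply hf hg, funext hfg, fderiv_const_apply]; rfl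

theorem dotProduct_fderiv_self_eq_zero {c : ℝ} (hf : DifferentiableAt ℝ f p)
    (hff : ∀ q, f q ⬝ᵥ f q = c) (h : H) : f p ⬝ᵥ fderiv ℝ f p h = 0 := by
  have := fderiv_dotProduct_add_eq_zero hf hf hff h
  rw [dotProduct_comm] at this
  linarith

end DotProduct

open Complex

/-- Bilinear in the pair `(v, w)` and in the vector, so that the product rule applies to
`framePsi S v w e = fun p => frameCoord (v p, w p) (pd3 S e p)`. -/
noncomputable def frameCoord : ((Fin 3 → ℝ) × (Fin 3 → ℝ)) →ₗ[ℝ] (Fin 3 → ℝ) →ₗ[ℝ] ℂ :=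
  LinearMap.mk₂ ℝ (fun vw a => ((vw.1 ⬝ᵥ a : ℝ) : ℂ) + I * ((vw.2 ⬝ᵥ a : ℝ) : ℂ))
    (fun _ _ _ => by simp only [Prod.fst_add, Prod.snd_add, add_dotProduct]; push_cast; ring)
    (fun _ _ _ => by
      simp only [Prod.smul_fst, Prod.smul_snd, smul_dotProduct, smul_eq_mul, Complex.real_smul]
      push_cast; ring)
    (fun _ _ _ => by simp only [dotProduct_add]; push_cast; ring)
    (fun _ _ _ => by
      simp only [dotProduct_smul, smul_eq_mul, Complex.real_smul]; push_cast; ring)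

@[simp]
theorem frameCoord_apply (v w a : Fin 3 → ℝ) :
    frameCoord (v, w) a = ((v ⬝ᵥ a : ℝ) : ℂ) + I * ((w ⬝ᵥ a : ℝ) : ℂ) :=
  rfl

section Frame

variable {s v : Fin 3 → ℝ}

theorem frameCoord_cross (hs : s ⬝ᵥ s = 1) (hsv : s ⬝ᵥ v = 0) (x : Fin 3 → ℝ) :
    frameCoord (v, s ⨯₃ v) (s ⨯₃ x) = I * frameCoord (v, s ⨯₃ v) x := by
  have hv : v ⬝ᵥ s ⨯₃ x = -(s ⨯₃ v ⬝ᵥ x) := by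
    rw [triple_product_permutation, triple_product_permutation, ← cross_anticomm,
      dotProduct_neg, dotProduct_comm]
  have hw : s ⨯₃ v ⬝ᵥ s ⨯₃ x = v ⬝ᵥ x := by
    rw [cross_dot_cross, hs, dotProduct_comm v s, hsv]; ring
  simp only [frameCoord_apply, hv, hw]
  push_cast
  linear_combination -((s ⨯₃ v ⬝ᵥ x : ℝ) : ℂ) * I_sq

theorem dotProduct_eq_sum_frame (hs : s ⬝ᵥ s = 1) (hv : v ⬝ᵥ v = 1) (hsv : s ⬝ᵥ v = 0)
    (a b : Fin 3 → ℝ) :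
    a ⬝ᵥ b = (s ⬝ᵥ a) * (s ⬝ᵥ b) + (v ⬝ᵥ a) * (v ⬝ᵥ b) + (s ⨯₃ v ⬝ᵥ a) * (s ⨯₃ v ⬝ᵥ b) := by
  set M : Matrix (Fin 3) (Fin 3) ℝ := ![s, v, s ⨯₃ v]
  have hrows : M * Mᵀ = 1 := by
    have hww : s ⨯₃ v ⬝ᵥ s ⨯₃ v = 1 := by
      rw [cross_dot_cross, hs, hv, dotProduct_comm v s, hsv]; ring
    ext i j
    change M i ⬝ᵥ M j = _
    fin_cases i <;> fin_cases j <;>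
      simp [M, hs, hv, hsv, hww, dotProduct_comm v s, dotProduct_comm (s ⨯₃ v), dot_self_cross,
        dot_cross_self]
  have hcols : Mᵀ * M = 1 := mul_eq_one_comm.mp hrows
  calc a ⬝ᵥ b = a ⬝ᵥ (Mᵀ *ᵥ (M *ᵥ b)) := by rw [mulVec_mulVec, hcols, one_mulVec]
    _ = (M *ᵥ a) ⬝ᵥ (M *ᵥ b) := by rw [dotProduct_mulVec, vecMul_transpose]
    _ = _ := by rw [vec3_dotProduct]; rfl

/-- `(dv, dw)` is the variation of the orthonormal frame `(s, v, s × v)`, and `a ⊥ s`. -/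
theorem frameCoord_variation (hs : s ⬝ᵥ s = 1) (hv : v ⬝ᵥ v = 1) (hsv : s ⬝ᵥ v = 0)
    {dv dw a : Fin 3 → ℝ} (hdv : v ⬝ᵥ dv = 0) (hdw : s ⨯₃ v ⬝ᵥ dw = 0)
    (hdvw : v ⬝ᵥ dw + s ⨯₃ v ⬝ᵥ dv = 0) (ha : s ⬝ᵥ a = 0) :
    frameCoord (dv, dw) a = -I * ((s ⨯₃ v ⬝ᵥ dv : ℝ) : ℂ) * frameCoord (v, s ⨯₃ v) a := by
  have hva : dv ⬝ᵥ a = (s ⨯₃ v ⬝ᵥ dv) * (s ⨯₃ v ⬝ᵥ a) := by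
    rw [dotProduct_eq_sum_frame hs hv hsv, ha, hdv]; ring
  have hwa : dw ⬝ᵥ a = -(s ⨯₃ v ⬝ᵥ dv) * (v ⬝ᵥ a) := by
    rw [dotProduct_eq_sum_frame hs hv hsv, ha, hdw, eq_neg_of_add_eq_zero_left hdvw]; ring
  simp only [frameCoord_apply, hva, hwa]
  push_cast
  linear_combination ((s ⨯₃ v ⬝ᵥ dv : ℝ) : ℂ) * ((s ⨯₃ v ⬝ᵥ a : ℝ) : ℂ) * I_sq

end Frame

theorem fderiv_frameCoord_apply {H : Type*} [NormedAddCommGroup H] [NormedSpace ℝ H]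
    {v w a : H → Fin 3 → ℝ} {p : H} (hv : DifferentiableAt ℝ v p)
    (hw : DifferentiableAt ℝ w p) (ha : DifferentiableAt ℝ a p) (h : H) :
    fderiv ℝ (fun q => frameCoord (v q, w q) (a q)) p h =
      frameCoord (fderiv ℝ v p h, fderiv ℝ w p h) (a p) +
        frameCoord (v p, w p) (fderiv ℝ a p h) := by
  rw [frameCoord.fderiv_bilinear_apply (hv.prodMk hw) ha, hv.fderiv_prodMk hw]
  rfl

theorem differentiable_pd3 {E : Type*} [NormedAddCommGroup E] [NormedSpace ℝ E]
    {f : ℝ × ℝ × ℝ → E} (hf : ContDiff ℝ 2 f) (e : ℝ × ℝ × ℝ) : Differentiable ℝ (pd3 f e) :=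
  ((hf.fderiv_right (m := 1) le_rfl).clm_apply contDiff_const).differentiable one_ne_zero

theorem Dcov_framePsi {S v : ℝ × ℝ × ℝ → Fin 3 → ℝ} {p e : ℝ × ℝ × ℝ}
    (hS : DifferentiableAt ℝ S p) (hv : DifferentiableAt ℝ v p)
    (hSe : DifferentiableAt ℝ (pd3 S e) p) (hS1 : ∀ q, S q ⬝ᵥ S q = 1)
    (hv1 : ∀ q, v q ⬝ᵥ v q = 1) (hSv : ∀ q, S q ⬝ᵥ v q = 0) (e' : ℝ × ℝ × ℝ) :
    Dcov (frameA v (fun q => S q ⨯₃ v q) e') (framePsi S v (fun q => S q ⨯₃ v q) e) e' p =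
      frameCoord (v p, S p ⨯₃ v p) (pd3 (pd3 S e) e' p) := by
  set w : ℝ × ℝ × ℝ → Fin 3 → ℝ := fun q => S q ⨯₃ v q
  have hw : DifferentiableAt ℝ w p := crossProduct.differentiableAt_bilinear hS hv
  have hw1 : ∀ q, w q ⬝ᵥ w q = 1 := fun q => by
    rw [cross_dot_cross, hS1, hv1, dotProduct_comm (v q), hSv]; ring
  have hvw : ∀ q, v q ⬝ᵥ w q = 0 := fun q => dot_cross_self _ _
  have hdvw : v p ⬝ᵥ fderiv ℝ w p e' + w p ⬝ᵥ fderiv ℝ v p e' = 0 := by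
    rw [dotProduct_comm (w p), add_comm]
    exact fderiv_dotProduct_add_eq_zero hv hw hvw e'
  have hvar : frameCoord (fderiv ℝ v p e', fderiv ℝ w p e') (pd3 S e p) =
      -I * (frameA v w e' p : ℂ) * framePsi S v w e p :=
    frameCoord_variation (hS1 p) (hv1 p) (hSv p) (dotProduct_fderiv_self_eq_zero hv hv1 e')
      (dotProduct_fderiv_self_eq_zero hw hw1 e') hdvw (dotProduct_fderiv_self_eq_zero hS hS1 e)
  calc Dcov (frameA v w e') (framePsi S v w e) e' p
      = fderiv ℝ (fun q => frameCoord (v q, w q) (pd3 S e q)) p e'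
          + I * (frameA v w e' p : ℂ) * framePsi S v w e p := rfl
    _ = frameCoord (v p, w p) (fderiv ℝ (pd3 S e) p e') := by
      rw [fderiv_frameCoord_apply hv hw hSe, hvar]; ring

theorem psi_t_identity_ishimori_general
    (S v : ℝ × ℝ × ℝ → Fin 3 → ℝ)
    (hS : ContDiff ℝ 2 S) (hv : ContDiff ℝ 2 v)
    (hS1 : ∀ p, S p ⬝ᵥ S p = 1) (hv1 : ∀ p, v p ⬝ᵥ v p = 1)
    (hSv : ∀ p, S p ⬝ᵥ v p = 0)
    (w : ℝ × ℝ × ℝ → Fin 3 → ℝ) (hw : ∀ p, w p = crossProduct (S p) (v p))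
    (φ : ℝ × ℝ × ℝ → ℝ) (κ : ℝ)
    (hIshimori : ∀ p : ℝ × ℝ × ℝ,
      pd3 S et p =
        crossProduct (S p) (pd3 (pd3 S e1) e1 p - pd3 (pd3 S e2) e2 p) +
          κ • ((fderiv ℝ φ p e1) • pd3 S e1 p + (fderiv ℝ φ p e2) • pd3 S e2 p)) :
    ∀ p : ℝ × ℝ × ℝ,
      framePsi S v w et p =
        Complex.I * (Dcov (frameA v w e1) (framePsi S v w e1) e1 p
            - Dcov (frameA v w e2) (framePsi S v w e2) e2 p)
          + (κ : ℂ) * (framePsi S v w e1 p * ((fderiv ℝ φ p e1 : ℝ) : ℂ)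
            + framePsi S v w e2 p * ((fderiv ℝ φ p e2 : ℝ) : ℂ)) := by
  obtain rfl : w = fun q => S q ⨯₃ v q := funext hw
  intro p
  have hψ : ∀ e, framePsi S v (fun q => S q ⨯₃ v q) e p =
      frameCoord (v p, S p ⨯₃ v p) (pd3 S e p) := fun _ => rfl
  have hD : ∀ e, Dcov (frameA v (fun q => S q ⨯₃ v q) e)
      (framePsi S v (fun q => S q ⨯₃ v q) e) e p =
        frameCoord (v p, S p ⨯₃ v p) (pd3 (pd3 S e) e p) := fun e =>
    Dcov_framePsi (hS.differentiable two_ne_zero p) (hv.differentiable two_ne_zero p)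
      (differentiable_pd3 hS e p) hS1 hv1 hSv e
  rw [hψ et, hIshimori p, hD, hD, hψ, hψ]
  simp only [map_add, map_sub, map_smul, frameCoord_cross (hS1 p) (hSv p), Complex.real_smul]
  ring

/-- For a solution of the Ishimori evolution equation one has
`ψ_t = i (D₁ψ₁ − D₂ψ₂) + κ (ψ₁ ∂₁φ + ψ₂ ∂₂φ)`. -/
theorem psi_t_identity_ishimori
    (S v : ℝ × ℝ × ℝ → Fin 3 → ℝ)
    (hS : ContDiff ℝ 2 S) (hv : ContDiff ℝ 2 v)
    (hS1 : ∀ p, S p ⬝ᵥ S p = 1) (hv1 : ∀ p, v p ⬝ᵥ v p = 1)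
    (hSv : ∀ p, S p ⬝ᵥ v p = 0)
    (w : ℝ × ℝ × ℝ → Fin 3 → ℝ) (hw : ∀ p, w p = crossProduct (S p) (v p))
    (φ : ℝ × ℝ × ℝ → ℝ) (hφ : ContDiff ℝ 1 φ) (κ : ℝ)
    (hIshimori : ∀ p : ℝ × ℝ × ℝ,
      pd3 S et p =
        crossProduct (S p) (pd3 (pd3 S e1) e1 p - pd3 (pd3 S e2) e2 p) +
          κ • ((fderiv ℝ φ p e1) • pd3 S e1 p + (fderiv ℝ φ p e2) • pd3 S e2 p)) :
    ∀ p : ℝ × ℝ × ℝ,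
      framePsi S v w et p =
        Complex.I * (Dcov (frameA v w e1) (framePsi S v w e1) e1 p
            - Dcov (frameA v w e2) (framePsi S v w e2) e2 p)
          + (κ : ℂ) * (framePsi S v w e1 p * ((fderiv ℝ φ p e1 : ℝ) : ℂ)
            + framePsi S v w e2 p * ((fderiv ℝ φ p e2 : ℝ) : ℂ)) :=
  psi_t_identity_ishimori_general S v hS hv hS1 hv1 hSv w hw φ κ hIshimori
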